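/- Let S₁, S₂ ∈ GDF be such that S₂ ⊊ S₁ and Θ(S₁) = Θ(S₂). Then there exist Q ∈ DB and Q' ∈ D_μ such that Q' ⊂ 9Q, ℓ(Q) = ℓ(Q'), S₁ ⊃ Q' ⊃ S₂, and S₂ ∈ G(Q, M(Q)) for some M(Q) ≥ M₀. -/

import Mathlib

open MeasureTheory Metric Set
open scoped ENNReal

noncomputable section

/-- Euclidean space `ℝ^{n+1}`. -/
abbrev Euc (n : ℕ) := EuclideanSpace ℝ (Fin (n + 1))

/-- The support of a measure: points all of whose balls have positive measure. -/
def msupport {n : ℕ} (μ : Measure (Euc n)) : Set (Euc n) :=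
  {x | ∀ r : ℝ, 0 < r → 0 < μ (ball x r)}

/-- A David–Mattila dyadic lattice associated with a measure μ on ℝ^{n+1}, with
parameters C₀ and A₀.  The "cubes" of generation k form a partition of supp μ into
Borel sets; each cube Q has a center `x_Q ∈ supp μ` and a ball `B(Q) = B(x_Q, r(Q))`
with `A₀^{-k} ≤ r(Q) ≤ C₀ A₀^{-k}`, `supp μ ∩ B(Q) ⊆ Q ⊆ supp μ ∩ B(x_Q, 28 r(Q))`;
cubes of different generations are nested or disjoint, the balls `5B(Q)` of a given
generation are pairwise disjoint, and the cubes have small boundaries. -/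
structure DMLattice (n : ℕ) (μ : Measure (Euc n)) where
  C₀ : ℝ
  A₀ : ℝ
  one_lt_C₀ : 1 < C₀
  A₀_large : 5000 * C₀ < A₀
  Cube : Type
  gen : Cube → ℕ
  shape : Cube → Set (Euc n)
  center : Cube → Euc n
  radius : Cube → ℝ
  shape_borel : ∀ Q, MeasurableSet (shape Q)
  center_mem : ∀ Q, center Q ∈ msupport μ
  radius_lb : ∀ Q, A₀ ^ (-(gen Q : ℤ)) ≤ radius Q
  radius_ub : ∀ Q, radius Q ≤ C₀ * A₀ ^ (-(gen Q : ℤ))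
  ball_subset : ∀ Q, msupport μ ∩ ball (center Q) (radius Q) ⊆ shape Q
  shape_subset : ∀ Q, shape Q ⊆ msupport μ ∩ ball (center Q) (28 * radius Q)
  covers : ∀ k : ℕ, ∀ x ∈ msupport μ, ∃ Q, gen Q = k ∧ x ∈ shape Q
  pairwise_disj : ∀ Q Q', gen Q = gen Q' → Q ≠ Q' → Disjoint (shape Q) (shape Q')
  nested : ∀ Q Q', gen Q ≤ gen Q' → shape Q' ⊆ shape Q ∨ Disjoint (shape Q) (shape Q')
  fiveB_disj : ∀ Q Q', gen Q = gen Q' → Q ≠ Q' →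
    Disjoint (ball (center Q) (5 * radius Q)) (ball (center Q') (5 * radius Q'))
  small_boundaries : ∃ Csb : ℝ, 0 < Csb ∧ ∀ Q : Cube, ∀ l : ℕ,
    μ {x ∈ msupport μ |
        (x ∈ shape Q ∧ infDist x (msupport μ \ shape Q) < A₀ ^ (-(gen Q : ℤ) - l)) ∨
        (x ∉ shape Q ∧ infDist x (shape Q) < A₀ ^ (-(gen Q : ℤ) - l))}
      ≤ ENNReal.ofReal ((Csb⁻¹ * C₀ ^ (-(3 * (n + 1) + 1 : ℤ)) * A₀) ^ (-(l : ℤ))) *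
          μ (ball (center Q) (90 * radius Q))

namespace DMLattice

variable {n : ℕ} {μ : Measure (Euc n)} (D : DMLattice n μ)

/-- Side length `ℓ(Q) = 56 C₀ A₀^{-k}` for a cube of generation k. -/
def len (Q : D.Cube) : ℝ := 56 * D.C₀ * D.A₀ ^ (-(D.gen Q : ℤ))

/-- The ball `2B_Q = B(x_Q, 56 r(Q))` (where `B_Q = 28 B(Q)`). -/
def doubleBall (Q : D.Cube) : Set (Euc n) := ball (D.center Q) (56 * D.radius Q)

/-- `μ(2B_Q)` as a real number. -/
def vol2 (Q : D.Cube) : ℝ := (μ (D.doubleBall Q)).toReal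

/-- The density `μ(2B_Q)/ℓ(Q)^n`. -/
def density (Q : D.Cube) : ℝ := D.vol2 Q / D.len Q ^ n

/-- The discretized density `Θ(Q)`: the number `A₀^{kn}` (k ∈ ℤ) such that
`μ(2B_Q)/ℓ(Q)^n ∈ [A₀^{kn}, A₀^{(k+1)n})`. -/
def Θ (Q : D.Cube) : ℝ := (D.A₀ ^ n) ^ ⌊Real.logb (D.A₀ ^ n) (D.density Q)⌋

/-- `P(Q) = Σ_{R ⊇ Q} (ℓ(Q)/ℓ(R)^{n+1}) μ(2B_R)`. -/
def Pcoef (Q : D.Cube) : ℝ :=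
  ∑' R : {R : D.Cube // D.shape Q ⊆ D.shape R},
    D.len Q / D.len R.1 ^ (n + 1) * D.vol2 R.1

/-- `Q` is P-doubling: `P(Q) ≤ 4 A₀^n μ(2B_Q)/ℓ(Q)^n`. -/
def PDoubling (Q : D.Cube) : Prop :=
  D.Pcoef Q ≤ 4 * D.A₀ ^ n * D.vol2 Q / D.len Q ^ n

/-- The enlarged cube `λQ`: the union of the cubes P of the same generation as Q with
`dist(x_Q, P) ≤ λ ℓ(Q)`. -/
def enlarge (lam : ℝ) (Q : D.Cube) : Set (Euc n) :=
  ⋃ P ∈ {P : D.Cube | D.gen P = D.gen Q ∧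
      infDist (D.center Q) (D.shape P) ≤ lam * D.len Q}, D.shape P

/-- `D_μ(λQ) = {P ∈ D_μ : P ⊆ λQ, ℓ(P) ≤ ℓ(Q)}`. -/
def cubesIn (lam : ℝ) (Q : D.Cube) : Set D.Cube :=
  {P | D.shape P ⊆ D.enlarge lam Q ∧ D.len P ≤ D.len Q}

/-- `hd^k(Q)`: the maximal cubes P with `ℓ(P) < ℓ(Q)` and `Θ(P) ≥ A₀^{kn} Θ(Q)`. -/
def hd (k : ℕ) (Q : D.Cube) : Set D.Cube :=
  {P | (D.len P < D.len Q ∧ D.A₀ ^ (k * n) * D.Θ Q ≤ D.Θ P) ∧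
    ∀ P' : D.Cube, D.shape P ⊆ D.shape P' →
      (D.len P' < D.len Q ∧ D.A₀ ^ (k * n) * D.Θ Q ≤ D.Θ P') →
      D.shape P' = D.shape P}

/-- `σ(I) = Σ_{P ∈ I} Θ(P)² μ(P)` for a family of cubes I. -/
def sigmaE (I : Set D.Cube) : ℝ≥0∞ :=
  ∑' P : I, ENNReal.ofReal (D.Θ P.1 ^ 2) * μ (D.shape P.1)

/-- The k-th piece `Σ_{P ∈ hd^k(Q) ∩ D_μ(λQ)} (ℓ(P)/ℓ(Q))^{1/2} Θ(P)² μ(P)` of the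
energy `E_∞(λQ)`. -/
def EinfPiece (lam : ℝ) (k : ℕ) (Q : D.Cube) : ℝ≥0∞ :=
  ∑' P : {P : D.Cube // P ∈ D.hd k Q ∧ P ∈ D.cubesIn lam Q},
    ENNReal.ofReal (Real.sqrt (D.len P.1 / D.len Q) * D.Θ P.1 ^ 2) * μ (D.shape P.1)

/-- `E_∞(λQ) = sup_{k ≥ 1} Σ_{P ∈ hd^k(Q) ∩ D_μ(λQ)} (ℓ(P)/ℓ(Q))^{1/2} Θ(P)² μ(P)`. -/
def Einf (lam : ℝ) (Q : D.Cube) : ℝ≥0∞ :=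
  ⨆ k : {k : ℕ // 1 ≤ k}, D.EinfPiece lam k.1 Q

/-- The family `DB(M)` of P-doubling cubes Q with `E_∞(9Q) > M² Θ(Q)² μ(9Q)`. -/
def DB (M : ℝ) : Set D.Cube :=
  {Q | D.PDoubling Q ∧
    ENNReal.ofReal (M ^ 2 * D.Θ Q ^ 2) * μ (D.enlarge 9 Q) < D.Einf 9 Q}

/-- `E(λQ) = Σ_{P ∈ D_μ(λQ)} (ℓ(P)/ℓ(Q))^{3/4} Θ(P)² μ(P)`. -/
def Efrac (lam : ℝ) (Q : D.Cube) : ℝ≥0∞ :=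
  ∑' P : D.cubesIn lam Q,
    ENNReal.ofReal ((D.len P.1 / D.len Q) ^ ((3 : ℝ) / 4) * D.Θ P.1 ^ 2) * μ (D.shape P.1)

/-- `hd^k(Q)` extended to `k = 0` by `hd^0(Q) = {Q}`. -/
def hdExt (k : ℕ) (Q : D.Cube) : Set D.Cube := if k = 0 then {Q} else D.hd k Q

/-- `E^H(λQ) = Σ_{k ≥ 0} Σ_{P ∈ hd^k(Q) ∩ D_μ(λQ)} (ℓ(P)/ℓ(Q))^{3/4} Θ(P)² μ(P)`. -/
def EH (lam : ℝ) (Q : D.Cube) : ℝ≥0∞ :=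
  ∑' k : ℕ, ∑' P : {P : D.Cube // P ∈ D.hdExt k Q ∧ P ∈ D.cubesIn lam Q},
    ENNReal.ofReal ((D.len P.1 / D.len Q) ^ ((3 : ℝ) / 4) * D.Θ P.1 ^ 2) * μ (D.shape P.1)

/-- `k_Λ = ((8n-1)/(8n-2)) k₀`. -/
def kLam (n k₀ : ℕ) : ℕ := (8 * n - 1) * k₀ / (8 * n - 2)

/-- `Λ = A₀^{k_Λ n}`. -/
def Lam (k₀ : ℕ) : ℝ := D.A₀ ^ (kLam n k₀ * n)

/-- `M₀ = A₀^{k₀ n}`. -/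
def Mzero (k₀ : ℕ) : ℝ := D.A₀ ^ (k₀ * n)

/-- For `Q ∈ DB(M)`, the minimal `k ≥ 1` such that
`Σ_{P ∈ hd^k(Q) ∩ D_μ(9Q)} (ℓ(P)/ℓ(Q))^{1/2} Θ(P)² μ(P) > M² Θ(Q)² μ(9Q)`. -/
def kQM (M : ℝ) (Q : D.Cube) : ℕ :=
  sInf {k : ℕ | 1 ≤ k ∧
    ENNReal.ofReal (M ^ 2 * D.Θ Q ^ 2) * μ (D.enlarge 9 Q) < D.EinfPiece 9 k Q}

/-- `G(Q,M)`: those `S ∈ hd^{k(Q,M)-k_Λ}(Q) ∩ D_μ(9Q)` with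
`μ(S) ≤ 2 Λ² Σ_{P ∈ hd^{k(Q,M)}(Q), P ⊆ S} (ℓ(P)/ℓ(S))^{1/2} μ(P)`. -/
def G (k₀ : ℕ) (M : ℝ) (Q : D.Cube) : Set D.Cube :=
  {S | S ∈ D.hd (D.kQM M Q - kLam n k₀) Q ∧ S ∈ D.cubesIn 9 Q ∧
    μ (D.shape S) ≤ ENNReal.ofReal (2 * D.Lam k₀ ^ 2) *
      ∑' P : {P : D.Cube // P ∈ D.hd (D.kQM M Q) Q ∧ D.shape P ⊆ D.shape S},
        ENNReal.ofReal (Real.sqrt (D.len P.1 / D.len S)) * μ (D.shape P.1)}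

/-- `big_λ(S) = {P ∈ hd^{k(Q,M)}(Q) : P ⊆ S, ℓ(P) ≥ λ ℓ(S)}`. -/
def bigCubes (M : ℝ) (lam' : ℝ) (Q S : D.Cube) : Set D.Cube :=
  {P | P ∈ D.hd (D.kQM M Q) Q ∧ D.shape P ⊆ D.shape S ∧ lam' * D.len S ≤ D.len P}

/-- The good dominating family `GDF`, relative to a choice function `MQ` assigning to
each `Q ∈ DB` a threshold `M(Q)`: the P-doubling cubes S belonging to `G(Q, M(Q))` for
some `Q ∈ DB`. -/
def GDF (k₀ : ℕ) (MQ : D.Cube → ℝ) : Set D.Cube :=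
  {S | D.PDoubling S ∧ ∃ Q ∈ D.DB (D.Mzero k₀), S ∈ D.G k₀ (MQ Q) Q}

/-- The family `I_S = {P ∈ hd^{k(Q,M(Q))}(Q) : P ⊆ S, ℓ(P) ≥ λ₀ ℓ(S)}`, `λ₀ = c₀ Λ⁻⁴`,
where `Q = QofS S` is a chosen cube of `DB` with `S ∈ G(Q, M(Q))`. -/
def ISet (k₀ : ℕ) (c₀ : ℝ) (MQ : D.Cube → ℝ) (QofS : D.Cube → D.Cube) (S : D.Cube) :
    Set D.Cube :=
  D.bigCubes (MQ (QofS S)) (c₀ * D.Lam k₀ ^ (-(4 : ℤ))) (QofS S) S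

end DMLattice


namespace DMLattice

variable {n : ℕ} {μ : Measure (Euc n)} (Dl : DMLattice n μ)

/-- The lattice is *enhanced*: the conclusion of Lemma 2.9 of Dąbrowski–Tolsa holds
(with γ = 9/10), i.e. for every cube Q the boundary family `\wt D_μ(Q)` (cubes P inside Q
with `2B_P` meeting `supp μ \ Q`, or outside Q with `ℓ(P) ≤ ℓ(Q)` and `2B_P` meeting Q)
satisfies
`Σ_{P ∈ \wt D_μ(Q)} (ℓ(Q)/ℓ(P))^{(1-γ)/2} θ(2B_P)² μ(P)
  ≤ C(γ) Σ_{P ⊆ 9Q, ℓ(P) ≤ ℓ(Q)} (ℓ(P)/ℓ(Q))^γ θ(2B_P)² μ(P)`. -/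
def Enhanced : Prop :=
  ∃ Cg : ℝ, 0 < Cg ∧ ∀ Q : Dl.Cube,
    (∑' P : {P : Dl.Cube // (Dl.shape P ⊆ Dl.shape Q ∧
          (Dl.doubleBall P ∩ (msupport μ \ Dl.shape Q)).Nonempty) ∨
        (Dl.len P ≤ Dl.len Q ∧ Disjoint (Dl.shape P) (Dl.shape Q) ∧
          (Dl.doubleBall P ∩ Dl.shape Q).Nonempty)},
        (Dl.len Q / Dl.len P.1) ^ ((1 : ℝ) / 20) * Dl.density P.1 ^ 2 *
          (μ (Dl.shape P.1)).toReal)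
      ≤ Cg * ∑' P : {P : Dl.Cube // Dl.shape P ⊆ Dl.enlarge 9 Q ∧ Dl.len P ≤ Dl.len Q},
          (Dl.len P.1 / Dl.len Q) ^ ((9 : ℝ) / 10) * Dl.density P.1 ^ 2 *
            (μ (Dl.shape P.1)).toReal

end DMLattice

/-!
Let `S₂ ∈ G(Q, M(Q))`, so `S₂` is a maximal cube with `ℓ(S₂) < ℓ(Q)` and
`Θ(S₂) ≥ A₀^{kn} Θ(Q)`. Since `Θ(S₁) = Θ(S₂)` and `S₁ ⊋ S₂`, maximality forces
`ℓ(S₁) ≥ ℓ(Q)`. The cube `Q'` of the generation of `Q` that contains `S₂` lies in `9Q`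
because `S₂` does, and it lies in `S₁` because cubes of the lattice are nested or disjoint.
-/

namespace DMLattice

variable {n : ℕ} {μ : Measure (Euc n)} (D : DMLattice n μ)

lemma one_lt_A₀ : 1 < D.A₀ := by
  linarith [D.one_lt_C₀, D.A₀_large]

lemma radius_pos (Q : D.Cube) : 0 < D.radius Q :=
  (zpow_pos (one_pos.trans D.one_lt_A₀) _).trans_le (D.radius_lb Q)

lemma center_mem_shape (Q : D.Cube) : D.center Q ∈ D.shape Q :=
  D.ball_subset Q ⟨D.center_mem Q, mem_ball_self (D.radius_pos Q)⟩

variable {D}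

lemma len_eq_of_gen_eq {P R : D.Cube} (h : D.gen P = D.gen R) : D.len P = D.len R := by
  rw [len, len, h]

lemma len_le_len_iff {P R : D.Cube} : D.len P ≤ D.len R ↔ D.gen R ≤ D.gen P := by
  have h56 : (0 : ℝ) < 56 * D.C₀ := by linarith [D.one_lt_C₀]
  rw [len, len, mul_le_mul_iff_right₀ h56, zpow_le_zpow_iff_right₀ D.one_lt_A₀,
    neg_le_neg_iff, Nat.cast_le]

lemma shape_subset_of_gen_le_of_mem {P R : D.Cube} {x : Euc n} (hgen : D.gen R ≤ D.gen P)
    (hxP : x ∈ D.shape P) (hxR : x ∈ D.shape R) : D.shape P ⊆ D.shape R :=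
  (D.nested R P hgen).resolve_right fun h ↦ disjoint_left.mp h hxR hxP

lemma exists_superset_of_subset_enlarge {lam : ℝ} {Q S : D.Cube}
    (hS : D.shape S ⊆ D.enlarge lam Q) (hgen : D.gen Q ≤ D.gen S) :
    ∃ Q', D.gen Q' = D.gen Q ∧ D.shape Q' ⊆ D.enlarge lam Q ∧ D.shape S ⊆ D.shape Q' := by
  have hx := hS (D.center_mem_shape S)
  rw [enlarge, mem_iUnion₂] at hx
  obtain ⟨Q', hQ', hxQ'⟩ := hx
  refine ⟨Q', hQ'.1, subset_biUnion_of_mem (u := D.shape) hQ', ?_⟩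
  exact shape_subset_of_gen_le_of_mem (hQ'.1 ▸ hgen) (D.center_mem_shape S) hxQ'

lemma len_le_of_mem_hd_of_ssubset {k : ℕ} {Q S S' : D.Cube} (hS : S ∈ D.hd k Q)
    (hSS' : D.shape S ⊂ D.shape S') (hΘ : D.A₀ ^ (k * n) * D.Θ Q ≤ D.Θ S') :
    D.len Q ≤ D.len S' :=
  le_of_not_gt fun hlen ↦ hSS'.ne (hS.2 S' hSS'.subset ⟨hlen, hΘ⟩).symm

end DMLattice

theorem statement16_general (n : ℕ) :
    ∀ cc aa : ℝ, ∃ k₀min : ℕ,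
      ∀ (μ : Measure (Euc n)) (D : DMLattice n μ), D.C₀ = cc → D.A₀ = aa → D.Enhanced →
      ∀ k₀ : ℕ, k₀min ≤ k₀ → (8 * n - 2) ∣ k₀ →
      ∀ MQ : D.Cube → ℝ,
        (∀ Q ∈ D.DB (D.Mzero k₀),
          D.Mzero k₀ ≤ MQ Q ∧ Q ∈ D.DB (MQ Q) ∧ Q ∉ D.DB (2 * MQ Q)) →
      ∀ S₁ ∈ D.GDF k₀ MQ, ∀ S₂ ∈ D.GDF k₀ MQ,
        D.shape S₂ ⊂ D.shape S₁ → D.Θ S₁ = D.Θ S₂ →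
        ∃ Q Q' : D.Cube, Q ∈ D.DB (D.Mzero k₀) ∧
          D.shape Q' ⊆ D.enlarge 9 Q ∧ D.len Q = D.len Q' ∧
          D.shape S₂ ⊆ D.shape Q' ∧ D.shape Q' ⊆ D.shape S₁ ∧
          ∃ M : ℝ, D.Mzero k₀ ≤ M ∧ S₂ ∈ D.G k₀ M Q := by
  refine fun _ _ ↦ ⟨0, fun μ D _ _ _ k₀ _ _ MQ hMQ S₁ _ S₂ hS₂ hS₂S₁ hΘ ↦ ?_⟩
  obtain ⟨-, Q, hQ, hG⟩ := hS₂
  have hS₂hd : S₂ ∈ D.hd _ Q := hG.1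
  have hQS₁ : D.len Q ≤ D.len S₁ :=
    DMLattice.len_le_of_mem_hd_of_ssubset hS₂hd hS₂S₁ (hΘ ▸ hS₂hd.1.2)
  obtain ⟨Q', hgen, hQ'9Q, hS₂Q'⟩ :=
    DMLattice.exists_superset_of_subset_enlarge hG.2.1.1
      (DMLattice.len_le_len_iff.mp hS₂hd.1.1.le)
  have hQ'S₁ : D.shape Q' ⊆ D.shape S₁ :=
    DMLattice.shape_subset_of_gen_le_of_mem (hgen ▸ DMLattice.len_le_len_iff.mp hQS₁)
      (hS₂Q' (D.center_mem_shape S₂)) (hS₂S₁.subset (D.center_mem_shape S₂))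
  exact ⟨Q, Q', hQ, hQ'9Q, (DMLattice.len_eq_of_gen_eq hgen).symm, hS₂Q', hQ'S₁,
    MQ Q, (hMQ Q hQ).1, hG⟩

/-- **Lemma 5.7.** Let `S₁, S₂ ∈ GDF` with `S₂ ⊊ S₁` and
`Θ(S₁) = Θ(S₂)`.  Then there are `Q ∈ DB` and a cube `Q'` with `Q' ⊆ 9Q`,
`ℓ(Q) = ℓ(Q')`, `S₁ ⊇ Q' ⊇ S₂`, and `S₂ ∈ G(Q, M(Q))` for some `M(Q) ≥ M₀`. -/
theorem statement16 (n : ℕ) (hn : 1 ≤ n) :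
    ∀ cc aa : ℝ, ∃ k₀min : ℕ,
      ∀ (μ : Measure (Euc n)) (D : DMLattice n μ), D.C₀ = cc → D.A₀ = aa → D.Enhanced →
      ∀ k₀ : ℕ, k₀min ≤ k₀ → (8 * n - 2) ∣ k₀ →
      ∀ MQ : D.Cube → ℝ,
        (∀ Q ∈ D.DB (D.Mzero k₀),
          D.Mzero k₀ ≤ MQ Q ∧ Q ∈ D.DB (MQ Q) ∧ Q ∉ D.DB (2 * MQ Q)) →
      ∀ S₁ ∈ D.GDF k₀ MQ, ∀ S₂ ∈ D.GDF k₀ MQ,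
        D.shape S₂ ⊂ D.shape S₁ → D.Θ S₁ = D.Θ S₂ →
        ∃ Q Q' : D.Cube, Q ∈ D.DB (D.Mzero k₀) ∧
          D.shape Q' ⊆ D.enlarge 9 Q ∧ D.len Q = D.len Q' ∧
          D.shape S₂ ⊆ D.shape Q' ∧ D.shape Q' ⊆ D.shape S₁ ∧
          ∃ M : ℝ, D.Mzero k₀ ≤ M ∧ S₂ ∈ D.G k₀ M Q :=
  statement16_general n

end
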